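/- arXiv:1805.00840 — 2 statements merged into one kernel-verified Lean document; each statement's English description precedes it below -/
import Mathlib

section
/- Let G be a graph with a triangle uvw such that u and v have degree 2 in G. If M' is a uniquely restricted matching in G - {u,v}, then M' ∪ {uv} is a uniquely restricted matching in G. -/
open SimpleGraph

/-- A set of edges `M` is a matching in `G` if all its elements are edges of `G`
and distinct edges of `M` share no endpoint. -/
def IsMatchingSet {V : Type*} (G : SimpleGraph V) (M : Set (Sym2 V)) : Prop :=
  M ⊆ G.edgeSet ∧ M.Pairwise fun e f => ∀ v : V, v ∈ e → v ∉ f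

/-- The set of vertices covered by a set of edges. -/
def coveredVerts {V : Type*} (M : Set (Sym2 V)) : Set V := {v | ∃ e ∈ M, v ∈ e}

/-- A matching is uniquely restricted if no other matching covers the same vertex set. -/
def IsURMatching {V : Type*} (G : SimpleGraph V) (M : Set (Sym2 V)) : Prop :=
  IsMatchingSet G M ∧
    ∀ N : Set (Sym2 V), IsMatchingSet G N → coveredVerts N = coveredVerts M → N = M

/-- An `M`-alternating cycle: a cycle whose edges alternate (cyclically)
between `M` and the complement of `M`. -/
def IsAltCycle {V : Type*} (G : SimpleGraph V) (M : Set (Sym2 V)) {v : V}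
    (c : G.Walk v v) : Prop :=
  c.IsCycle ∧ List.Chain' (fun e f => (e ∈ M) ↔ ¬ (f ∈ M)) c.edges ∧
    ∀ e f : Sym2 V, c.edges.head? = some e → c.edges.getLast? = some f →
      ((f ∈ M) ↔ ¬ (e ∈ M))

/-- The graph obtained from `G` by deleting the vertices in `S`
(they remain as isolated vertices). -/
def delVerts {V : Type*} (G : SimpleGraph V) (S : Set V) : SimpleGraph V where
  Adj x y := G.Adj x y ∧ x ∉ S ∧ y ∉ S
  symm := ⟨by rintro x y ⟨h, hx, hy⟩; exact ⟨h.symm, hy, hx⟩⟩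
  loopless := ⟨by rintro x ⟨h, -, -⟩; exact G.irrefl h⟩

/-- The maximum size of a uniquely restricted matching in `G`. -/
noncomputable def nuUR {V : Type*} (G : SimpleGraph V) : ℕ :=
  sSup {k | ∃ M : Set (Sym2 V), IsURMatching G M ∧ M.ncard = k}

/-- The matching number of `G`. -/
noncomputable def nuM {V : Type*} (G : SimpleGraph V) : ℕ :=
  sSup {k | ∃ M : Set (Sym2 V), IsMatchingSet G M ∧ M.ncard = k}

/-- A bridge is good if it lies on a path between two vertices of degree at most 2. -/
def IsGoodBridge {V : Type*} [Fintype V] (G : SimpleGraph V) [DecidableRel G.Adj]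
    (e : Sym2 V) : Prop :=
  G.IsBridge e ∧ ∃ (x y : V) (p : G.Walk x y),
    p.IsPath ∧ G.degree x ≤ 2 ∧ G.degree y ≤ 2 ∧ e ∈ p.edges

/-! If `N` is a matching of `G` covering the same vertices as `M' ∪ {uv}`, the degree conditions
force `uv ∈ N`; then `N \ {uv}` is a matching of `G - {u,v}` covering the same vertices as `M'`,
so it equals `M'` by unique restrictedness. -/

namespace SimpleGraph

variable {V : Type*} {G : SimpleGraph V} {M : Set (Sym2 V)} {S : Set V} {x : V}

theorem delVerts_le : delVerts G S ≤ G := fun _ _ h => h.1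

theorem notMem_of_mem_edgeSet_delVerts {e : Sym2 V} (he : e ∈ (delVerts G S).edgeSet)
    (hx : x ∈ e) : x ∉ S := by
  induction e using Sym2.ind with
  | _ c d =>
    rcases Sym2.mem_iff.mp hx with rfl | rfl
    exacts [he.2.1, he.2.2]

theorem disjoint_coveredVerts_of_subset_edgeSet_delVerts (hM : M ⊆ (delVerts G S).edgeSet) :
    Disjoint (coveredVerts M) S :=
  Set.disjoint_left.mpr fun _ ⟨_, he, hx⟩ => notMem_of_mem_edgeSet_delVerts (hM he) hx

theorem coveredVerts_insert_mk (M : Set (Sym2 V)) (a b : V) :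
    coveredVerts (insert s(a, b) M) = {a, b} ∪ coveredVerts M := by
  ext x
  simp [coveredVerts, or_assoc]

theorem eq_or_eq_of_adj_of_degree_eq_two [Fintype V] [DecidableRel G.Adj] {y z t : V}
    (hdeg : G.degree x = 2) (hy : G.Adj x y) (hz : G.Adj x z) (hyz : y ≠ z) (ht : G.Adj x t) :
    t = y ∨ t = z := by
  classical
  have hsub : ({y, z} : Finset V) ⊆ G.neighborFinset x := by
    simp [Finset.insert_subset_iff, hy, hz]
  have hcard : (G.neighborFinset x).card ≤ ({y, z} : Finset V).card := by
    rw [Finset.card_pair hyz, card_neighborFinset_eq_degree, hdeg]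
  have ht' : t ∈ G.neighborFinset x := (mem_neighborFinset G x t).mpr ht
  simpa [← Finset.eq_of_subset_of_card_le hsub hcard] using ht'

theorem eq_or_eq_of_mem_edgeSet_of_degree_eq_two [Fintype V] [DecidableRel G.Adj] {y z : V}
    {e : Sym2 V} (hdeg : G.degree x = 2) (hy : G.Adj x y) (hz : G.Adj x z) (hyz : y ≠ z)
    (he : e ∈ G.edgeSet) (hx : x ∈ e) : e = s(x, y) ∨ e = s(x, z) := by
  obtain ⟨t, rfl⟩ := Sym2.mem_iff_exists.mp hx
  rcases eq_or_eq_of_adj_of_degree_eq_two hdeg hy hz hyz he with rfl | rfl <;> simp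

end SimpleGraph

namespace IsMatchingSet

variable {V : Type*} {G H : SimpleGraph V} {M N : Set (Sym2 V)} {a b x : V}

theorem mono (hGH : G ≤ H) (hM : IsMatchingSet G M) : IsMatchingSet H M :=
  ⟨hM.1.trans (edgeSet_mono hGH), hM.2⟩

theorem insert {e : Sym2 V} (hM : IsMatchingSet G M) (he : e ∈ G.edgeSet)
    (hdisj : ∀ f ∈ M, ∀ x ∈ e, x ∉ f) : IsMatchingSet G (insert e M) := by
  refine ⟨Set.insert_subset he hM.1, Set.pairwise_insert.mpr ⟨hM.2, fun f hf _ => ?_⟩⟩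
  exact ⟨hdisj f hf, fun x hxf hxe => hdisj f hf x hxe hxf⟩

theorem eq_of_mem_of_mem {e f : Sym2 V} (hM : IsMatchingSet G M) (he : e ∈ M) (hf : f ∈ M)
    (hxe : x ∈ e) (hxf : x ∈ f) : e = f :=
  by_contra fun hne => hM.2 he hf hne x hxe hxf

theorem diff_singleton_mk (hN : IsMatchingSet G N) (hab : s(a, b) ∈ N) :
    IsMatchingSet (delVerts G {a, b}) (N \ {s(a, b)}) := by
  refine ⟨fun e ⟨he, hne⟩ => ?_, hN.2.mono Set.sdiff_subset⟩
  have hfree : ∀ x ∈ e, x ∉ ({a, b} : Set V) := by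
    rintro x hx (rfl | rfl)
    exacts [hne (hN.eq_of_mem_of_mem he hab hx (Sym2.mem_mk_left _ _)),
      hne (hN.eq_of_mem_of_mem he hab hx (Sym2.mem_mk_right _ _))]
  induction e using Sym2.ind with
  | _ c d => exact ⟨hN.1 he, hfree c (Sym2.mem_mk_left _ _), hfree d (Sym2.mem_mk_right _ _)⟩

theorem coveredVerts_diff_singleton_mk (hN : IsMatchingSet G N) (hab : s(a, b) ∈ N) :
    coveredVerts (N \ {s(a, b)}) = coveredVerts N \ {a, b} := by
  ext x
  constructor
  · rintro ⟨e, ⟨he, hne⟩, hx⟩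
    refine ⟨⟨e, he, hx⟩, ?_⟩
    rintro (rfl | rfl)
    exacts [hne (hN.eq_of_mem_of_mem he hab hx (Sym2.mem_mk_left _ _)),
      hne (hN.eq_of_mem_of_mem he hab hx (Sym2.mem_mk_right _ _))]
  · rintro ⟨⟨e, he, hx⟩, hxab⟩
    refine ⟨e, ⟨he, ?_⟩, hx⟩
    rintro rfl
    exact hxab (Sym2.mem_iff.mp hx)

/-- Otherwise `u` is matched to `w`, and both edges at `v` meet `uw`. -/
theorem mk_mem_of_triangle [Fintype V] [DecidableRel G.Adj] {u v w : V}
    (hN : IsMatchingSet G N) (huv : G.Adj u v) (hvw : G.Adj v w) (huw : G.Adj u w)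
    (hu : G.degree u = 2) (hv : G.degree v = 2)
    (hucov : u ∈ coveredVerts N) (hvcov : v ∈ coveredVerts N) : s(u, v) ∈ N := by
  obtain ⟨e, he, hue⟩ := hucov
  obtain ⟨f, hf, hvf⟩ := hvcov
  rcases eq_or_eq_of_mem_edgeSet_of_degree_eq_two hu huv huw hvw.ne (hN.1 he) hue
    with rfl | rfl
  · exact he
  rcases eq_or_eq_of_mem_edgeSet_of_degree_eq_two hv huv.symm hvw huw.ne (hN.1 hf) hvf
    with rfl | rfl
  · have := hN.eq_of_mem_of_mem he hf (Sym2.mem_mk_left _ _) (Sym2.mem_mk_right _ _)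
    simp [huv.ne, hvw.ne.symm] at this
  · have := hN.eq_of_mem_of_mem he hf (Sym2.mem_mk_right _ _) (Sym2.mem_mk_right _ _)
    simp [huv.ne, huw.ne] at this

end IsMatchingSet

/-- If `uvw` is a triangle in `G` with `u` and `v` of degree `2`, and `M'` is a
uniquely restricted matching in `G - {u,v}`, then `M' ∪ {uv}` is a uniquely
restricted matching in `G`. -/
theorem stmt9 {V : Type*} [Fintype V] (G : SimpleGraph V) [DecidableRel G.Adj]
    (u v w : V) (huv : G.Adj u v) (hvw : G.Adj v w) (huw : G.Adj u w)
    (hu : G.degree u = 2) (hv : G.degree v = 2)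
    (M' : Set (Sym2 V)) (hM' : IsURMatching (delVerts G {u, v}) M') :
    IsURMatching G (insert s(u, v) M') := by
  obtain ⟨hM'match, hM'unique⟩ := hM'
  have hcovM' : coveredVerts (insert s(u, v) M') \ {u, v} = coveredVerts M' := by
    rw [coveredVerts_insert_mk, Set.union_sdiff_cancel_left
      (disjoint_coveredVerts_of_subset_edgeSet_delVerts hM'match.1).symm.inter_eq.subset]
  refine ⟨(hM'match.mono delVerts_le).insert huv fun f hf x hx hxf =>
    notMem_of_mem_edgeSet_delVerts (hM'match.1 hf) hxf (Sym2.mem_iff.mp hx), ?_⟩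
  intro N hN hcov
  have huvN : s(u, v) ∈ N := hN.mk_mem_of_triangle huv hvw huw hu hv
    (hcov ▸ ⟨s(u, v), Set.mem_insert _ _, Sym2.mem_mk_left _ _⟩)
    (hcov ▸ ⟨s(u, v), Set.mem_insert _ _, Sym2.mem_mk_right _ _⟩)
  have hrest : N \ {s(u, v)} = M' := hM'unique _ (hN.diff_singleton_mk huvN)
    (by rw [hN.coveredVerts_diff_singleton_mk huvN, hcov, hcovM'])
  rw [← hrest, Set.insert_sdiff_singleton, Set.insert_eq_of_mem huvN]
end

section
/- Let G be a subcubic graph with minimum degree 2 and girth at least 7, and let P = u_1 v_1 ... u_k v_k u_{k+1} be a path in G whose internal vertices v_1,...,v_k have degree 2 in G. Then the number c of components of G - V(P) that are trees satisfies c ≤ (k+3)/2. -/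
open SimpleGraph

/-!
Let `S = V(P)`. A tree component `T` of `G - S` with `n` vertices has degree sum `2n - 2` in
itself but at least `2n` in `G`, so at least two edges join `T` to `S`. Hence twice the number of
tree components is at most the number of edges leaving `S`. Every neighbour of a `v_i` lies on
`P`, and the `2k` path edges at the `u_j` use up `2k` of their at most `3(k + 1)` edge ends, so at
most `k + 3` edges leave `S`.
-/

open Finset

namespace SimpleGraph

variable {V : Type*} [Fintype V] [DecidableEq V] {G : SimpleGraph V} [DecidableRel G.Adj]

lemma IsTree.sum_degrees_add_two {W : Type*} [Fintype W] {T : SimpleGraph W}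
    [DecidableRel T.Adj] (hT : T.IsTree) : ∑ v, T.degree v + 2 = 2 * Fintype.card W := by
  rw [T.sum_degrees_eq_twice_card_edges, ← hT.card_edgeFinset]
  ring

lemma degree_eq_card_neighbors_mem_add_degree_induce_compl (S : Finset V)
    (v : ↥(S : Set V)ᶜ) :
    G.degree v = #{x ∈ G.neighborFinset v | x ∈ S} + (G.induce (S : Set V)ᶜ).degree v := by
  have hind := congrArg card (map_neighborFinset_induce (G := G) v)
  rw [card_map] at hind
  rw [← card_neighborFinset_eq_degree, ← card_neighborFinset_eq_degree, hind,
    ← card_filter_add_card_filter_not (· ∈ S)]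
  congr 2
  ext x
  simp

open Classical in
lemma ConnectedComponent.two_le_sum_of_isAcyclic {W : Type*} [Fintype W] {H : SimpleGraph W}
    [DecidableRel H.Adj] (d : W → ℕ) (hd : ∀ v, 2 ≤ H.degree v + d v) (C : H.ConnectedComponent)
    (hC : C.toSimpleGraph.IsAcyclic) :
    2 ≤ ∑ v with H.connectedComponentMk v = C, d v := by
  have hdeg (v : C) : C.toSimpleGraph.degree v = H.degree v := by
    unfold ConnectedComponent.toSimpleGraph
    convert degree_induce_of_neighborSet_subset (s := C.supp) (v := v)
      fun _ hx => C.mem_supp_of_adj_mem_supp v.2 hx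
    exact Iff.rfl
  have htree := IsTree.sum_degrees_add_two ⟨C.connected_toSimpleGraph, hC⟩
  have hlow : 2 * Fintype.card C ≤ ∑ v : C, (C.toSimpleGraph.degree v + d v) := calc
    2 * Fintype.card C = ∑ _v : C, 2 := by simp [mul_comm]
    _ ≤ _ := sum_le_sum fun v _ => hdeg v ▸ hd v
  rw [sum_add_distrib] at hlow
  rw [sum_subtype (p := (· ∈ C)) _ fun v => by rw [mem_filter_univ]; rfl]
  omega

lemma two_mul_ncard_acyclic_components_le (S : Finset V) (hmin : ∀ x, 2 ≤ G.degree x) :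
    2 * {C : (G.induce (S : Set V)ᶜ).ConnectedComponent |
          ((G.induce (S : Set V)ᶜ).induce C.supp).IsAcyclic}.ncard ≤
      ∑ v : ↥(S : Set V)ᶜ, #{x ∈ G.neighborFinset v | x ∈ S} := by
  classical
  set A := {C : (G.induce (S : Set V)ᶜ).ConnectedComponent |
    ((G.induce (S : Set V)ᶜ).induce C.supp).IsAcyclic}
  have hd (v : ↥(S : Set V)ᶜ) :
      2 ≤ (G.induce (S : Set V)ᶜ).degree v + #{x ∈ G.neighborFinset v | x ∈ S} := by
    rw [add_comm, ← degree_eq_card_neighbors_mem_add_degree_induce_compl]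
    exact hmin v
  calc 2 * A.ncard = ∑ C ∈ A.toFinset, 2 := by
        rw [Set.ncard_eq_toFinset_card', sum_const, smul_eq_mul, mul_comm]
    _ ≤ ∑ C ∈ A.toFinset, ∑ v with (G.induce (S : Set V)ᶜ).connectedComponentMk v = C,
          #{x ∈ G.neighborFinset v | x ∈ S} :=
        sum_le_sum fun C hC => C.two_le_sum_of_isAcyclic _ hd (Set.mem_toFinset.mp hC)
    _ ≤ ∑ C, ∑ v with (G.induce (S : Set V)ᶜ).connectedComponentMk v = C,
          #{x ∈ G.neighborFinset v | x ∈ S} :=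
        sum_le_sum_of_subset (subset_univ _)
    _ = _ := sum_fiberwise _ _ _

lemma sum_compl_card_neighbors_mem_eq (S : Finset V) :
    ∑ v : ↥(S : Set V)ᶜ, #{x ∈ G.neighborFinset v | x ∈ S} =
      ∑ x ∈ S, #{y ∈ G.neighborFinset x | y ∉ S} := by
  rw [← sum_subtype Sᶜ (p := (· ∈ (S : Set V)ᶜ)) (fun v => by simp)
    (fun v => #{x ∈ G.neighborFinset v | x ∈ S})]
  calc _ = ∑ v ∈ Sᶜ, #(S.bipartiteBelow G.Adj v) :=
        sum_congr rfl fun v _ => by congr 1; ext; simp [adj_comm, and_comm]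
    _ = ∑ x ∈ S, #(Sᶜ.bipartiteAbove G.Adj x) :=
        (sum_card_bipartiteAbove_eq_sum_card_bipartiteBelow _).symm
    _ = _ := sum_congr rfl fun x _ => by congr 1; ext; simp [and_comm]

lemma card_neighbors_notMem_add_card_adj_le (x : V) {S T : Finset V} (hTS : T ⊆ S) :
    #{y ∈ G.neighborFinset x | y ∉ S} + #{y ∈ T | G.Adj x y} ≤ G.degree x := by
  rw [← card_union_of_disjoint, ← card_neighborFinset_eq_degree]
  · exact card_le_card <| union_subset (filter_subset _ _) fun y hy => by
      simpa using (mem_filter.mp hy).2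
  · refine Finset.disjoint_left.mpr fun y hy hy' => ?_
    exact (mem_filter.mp hy).2 (hTS (mem_filter.mp hy').1)

lemma sum_card_neighbors_notMem_union_add_le {U W : Finset V} (hUW : Disjoint U W)
    (hU : ∀ x ∈ U, G.degree x ≤ 3) (hW : ∀ y ∈ W, G.degree y ≤ 2)
    (hWU : ∀ y ∈ W, 2 ≤ #{x ∈ U | G.Adj x y}) :
    ∑ x ∈ U ∪ W, #{y ∈ G.neighborFinset x | y ∉ U ∪ W} + 2 * #W ≤ 3 * #U := by
  have hWout (y) (hy : y ∈ W) : #{z ∈ G.neighborFinset y | z ∉ U ∪ W} = 0 := by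
    have hle := card_neighbors_notMem_add_card_adj_le (G := G) y
      (subset_union_left (s₁ := U) (s₂ := W))
    rw [filter_congr fun x _ => G.adj_comm y x] at hle
    have := hWU y hy
    have := hW y hy
    omega
  have hUout : ∑ x ∈ U, (#{y ∈ G.neighborFinset x | y ∉ U ∪ W} + #{y ∈ W | G.Adj x y}) ≤
      3 * #U := calc
    _ ≤ ∑ _x ∈ U, 3 := sum_le_sum fun x hx =>
        (card_neighbors_notMem_add_card_adj_le x subset_union_right).trans (hU x hx)
    _ = 3 * #U := by rw [sum_const, smul_eq_mul, mul_comm]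
  have hcross : 2 * #W ≤ ∑ x ∈ U, #{y ∈ W | G.Adj x y} := calc
    2 * #W = ∑ _y ∈ W, 2 := by rw [sum_const, smul_eq_mul, mul_comm]
    _ ≤ ∑ y ∈ W, #{x ∈ U | G.Adj x y} := sum_le_sum hWU
    _ = _ := (sum_card_bipartiteAbove_eq_sum_card_bipartiteBelow _).symm
  rw [sum_union hUW, sum_eq_zero hWout]
  rw [sum_add_distrib] at hUout
  omega

end SimpleGraph

theorem stmt16_general {V : Type*} [Fintype V] (G : SimpleGraph V) [DecidableRel G.Adj]
    (hsub : ∀ x : V, G.degree x ≤ 3) (hmin : ∀ x : V, 2 ≤ G.degree x)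
    (k : ℕ) (u : Fin (k + 1) → V) (w : Fin k → V)
    (hinj : Function.Injective (Sum.elim u w))
    (hadj1 : ∀ i : Fin k, G.Adj (u i.castSucc) (w i))
    (hadj2 : ∀ i : Fin k, G.Adj (w i) (u i.succ))
    (hdeg : ∀ i : Fin k, G.degree (w i) = 2) :
    2 * {C : (G.induce (Set.range u ∪ Set.range w)ᶜ).ConnectedComponent |
          ((G.induce (Set.range u ∪ Set.range w)ᶜ).induce C.supp).IsAcyclic}.ncard ≤
      k + 3 := by
  classical
  have hu : Function.Injective u := hinj.comp Sum.inl_injective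
  have hw : Function.Injective w := hinj.comp Sum.inr_injective
  set U : Finset V := univ.image u
  set W : Finset V := univ.image w
  have hUW : Disjoint U W := by
    simpa [U, W, Finset.disjoint_left] using
      fun i j h => Sum.inl_ne_inr (hinj (a₁ := .inl i) (a₂ := .inr j) h.symm)
  have hWU : ∀ y ∈ W, 2 ≤ #{x ∈ U | G.Adj x y} := by
    simp only [W, mem_image, mem_univ, true_and, forall_exists_index, forall_apply_eq_imp_iff]
    intro i
    calc 2 = #{u i.castSucc, u i.succ} :=
          (card_pair (hu.ne (Fin.castSucc_lt_succ (i := i)).ne)).symm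
      _ ≤ _ := card_le_card <| by
          simp [insert_subset_iff, U, hadj1 i, (hadj2 i).symm]
  have hbound := sum_card_neighbors_notMem_union_add_le hUW (fun x _ => hsub x)
    (by simp [W, hdeg]) hWU
  rw [card_image_of_injective _ hu, card_image_of_injective _ hw, card_univ, card_univ,
    Fintype.card_fin, Fintype.card_fin] at hbound
  have hS : Set.range u ∪ Set.range w = ↑(U ∪ W) := by simp [U, W]
  rw [hS]
  calc _ ≤ _ := two_mul_ncard_acyclic_components_le (U ∪ W) hmin
    _ = _ := sum_compl_card_neighbors_mem_eq (U ∪ W)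
    _ ≤ k + 3 := by omega

/-- If `G` is subcubic with minimum degree `2` and girth at least `7`, and
`P = u_1 v_1 ... u_k v_k u_{k+1}` is a path whose internal vertices `v_i` have degree
`2` in `G`, then the number `c` of tree components of `G - V(P)` satisfies
`c ≤ (k+3)/2`. -/
theorem stmt16 {V : Type*} [Fintype V] (G : SimpleGraph V) [DecidableRel G.Adj]
    (hsub : ∀ x : V, G.degree x ≤ 3) (hmin : ∀ x : V, 2 ≤ G.degree x)
    (hg : 7 ≤ G.egirth)
    (k : ℕ) (u : Fin (k + 1) → V) (w : Fin k → V)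
    (hinj : Function.Injective (Sum.elim u w))
    (hadj1 : ∀ i : Fin k, G.Adj (u i.castSucc) (w i))
    (hadj2 : ∀ i : Fin k, G.Adj (w i) (u i.succ))
    (hdeg : ∀ i : Fin k, G.degree (w i) = 2) :
    2 * {C : (G.induce (Set.range u ∪ Set.range w)ᶜ).ConnectedComponent |
          ((G.induce (Set.range u ∪ Set.range w)ᶜ).induce C.supp).IsAcyclic}.ncard ≤
      k + 3 :=
  stmt16_general G hsub hmin k u w hinj hadj1 hadj2 hdeg
end
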